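/- The entropy function 𝓔 : [0,γ*] → ℝ is continuously differentiable on [0,γ*] (with one-sided derivatives at the endpoints); in particular, 𝓔 ∈ C¹([0,γ*]). -/

import Mathlib

open Filter
open scoped Classical

noncomputable section GFFCommon

/-- Vertices of `ℤ²`. -/
abbrev Vtx : Type := ℤ × ℤ

/-- Sample space: a real-valued field indexed by the vertices of `ℤ²`. -/
abbrev FieldSp : Type := Vtx → ℝ

/-- The box `V_N = {0,1,…,N}²`. -/
def VN (N : ℕ) : Finset Vtx := Finset.Icc (0, 0) ((N : ℤ), (N : ℤ))

/-- The boundary `∂B` of a finite box `B ⊆ ℤ²`: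
vertices of `B` having a (Euclidean distance 1) neighbour outside `B`. -/
def bdry (B : Finset Vtx) : Finset Vtx :=
  B.filter fun v =>
    ¬((v.1 + 1, v.2) ∈ B ∧ (v.1 - 1, v.2) ∈ B ∧ (v.1, v.2 + 1) ∈ B ∧ (v.1, v.2 - 1) ∈ B)

/-- The interior `B° = B ∖ ∂B`. -/
def intr (B : Finset Vtx) : Finset Vtx := B \ bdry B

/-- The neighbourhood `[v]_λ` of `v` in `V_N`. -/
def nbhd (N : ℕ) (lam : ℝ) (v : Vtx) : Finset Vtx :=
  if lam = 0 then VN N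
  else if lam = 1 then {v}
  else (VN N).filter fun w =>
    |(w.1 : ℝ) - (v.1 : ℝ)| ≤ (N : ℝ) ^ ((1 : ℝ) - lam) / 2 ∧
    |(w.2 : ℝ) - (v.2 : ℝ)| ≤ (N : ℝ) ^ ((1 : ℝ) - lam) / 2

/-- The σ-algebra `F_{∂[v]_λ ∪ [v]_λ^c}`, generated by the field variables on the
boundary of `[v]_λ` and those outside of it. -/
def scaleAlg (N : ℕ) (lam : ℝ) (v : Vtx) : MeasurableSpace FieldSp :=
  ⨆ w ∈ {w : Vtx | w ∈ VN N ∧ w ∉ intr (nbhd N lam v)},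
    MeasurableSpace.comap (fun ω : FieldSp => ω w) inferInstance

/-- `G` is the Green function of simple random walk killed on `∂B`, normalized by `π/2`:
it vanishes unless both arguments are in `B°`, and in `B°` it satisfies the
first-step (discrete Poisson equation) characterization
`G(x,y) = (1/4)·Σ_{x'∼x} G(x',y) + (π/2)·1_{x=y}`. -/
def IsGreenFn (B : Finset Vtx) (G : Vtx → Vtx → ℝ) : Prop :=
  (∀ x y : Vtx, x ∉ intr B ∨ y ∉ intr B → G x y = 0) ∧
  ∀ y ∈ intr B, ∀ x ∈ intr B,
    G x y = (G (x.1 + 1, x.2) y + G (x.1 - 1, x.2) y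
        + G (x.1, x.2 + 1) y + G (x.1, x.2 - 1) y) / 4
      + (Real.pi / 2) * (if x = y then 1 else 0)

/-- `P` is the law (on the canonical space `FieldSp`) of the Gaussian free field on `V_N`:
a centered Gaussian field with covariance the Green function `G_{V_N}`. -/
def IsGFF (N : ℕ) (P : MeasureTheory.Measure FieldSp) : Prop :=
  MeasureTheory.IsProbabilityMeasure P ∧
  ∃ G : Vtx → Vtx → ℝ, IsGreenFn (VN N) G ∧
    ∀ c : Vtx → ℝ,
      P.map (fun ω => ∑ v ∈ VN N, c v * ω v) =
        ProbabilityTheory.gaussianReal 0 (Real.toNNReal (∑ v ∈ VN N, ∑ w ∈ VN N, c v * c w * G v w))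

open MeasureTheory in
/-- `φ_v(λ) = E[φ_v | F_{∂[v]_λ ∪ [v]_λ^c}]`. -/
def phiScale (N : ℕ) (P : MeasureTheory.Measure FieldSp) (v : Vtx) (lam : ℝ) : FieldSp → ℝ :=
  P[fun ω : FieldSp => ω v | scaleAlg N lam v]

/-- Admissible parameters `(σ,λ)`: `σ_1,…,σ_M > 0` and `0 = λ_0 < λ_1 < … < λ_M = 1`. -/
def ScaleParams (M : ℕ) (sigv lamv : ℕ → ℝ) : Prop :=
  1 ≤ M ∧ (∀ i ∈ Finset.Icc 1 M, 0 < sigv i) ∧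
  lamv 0 = 0 ∧ lamv M = 1 ∧ ∀ i, i < M → lamv i < lamv (i + 1)

/-- The `(σ,λ)`-GFF: `ψ_v = Σ_{i=1}^M σ_i (φ_v(λ_i) − φ_v(λ_{i−1}))`. -/
def psiFld (N M : ℕ) (sigv lamv : ℕ → ℝ) (P : MeasureTheory.Measure FieldSp) (v : Vtx) : FieldSp → ℝ :=
  fun ω => ∑ i ∈ Finset.Icc 1 M, sigv i * (phiScale N P v (lamv i) ω - phiScale N P v (lamv (i - 1)) ω)

open MeasureTheory in
/-- `ψ_v(λ) = E[ψ_v | F_{∂[v]_λ ∪ [v]_λ^c}]`. -/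
def psiScale (N M : ℕ) (sigv lamv : ℕ → ℝ) (P : MeasureTheory.Measure FieldSp) (v : Vtx) (lam : ℝ) :
    FieldSp → ℝ :=
  P[psiFld N M sigv lamv P v | scaleAlg N lam v]

/-- The increment `ψ_v(λ,λ') = ψ_v(λ') − ψ_v(λ)`. -/
def psiInc (N M : ℕ) (sigv lamv : ℕ → ℝ) (P : MeasureTheory.Measure FieldSp) (v : Vtx) (lam lam' : ℝ) :
    FieldSp → ℝ :=
  fun ω => psiScale N M sigv lamv P v lam' ω - psiScale N M sigv lamv P v lam ω

/-- The step function `σ(s) = σ_1 1_{{0}}(s) + Σ_{i=1}^M σ_i 1_{(λ_{i−1},λ_i]}(s)`. -/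
def stepFn (M : ℕ) (sigv lamv : ℕ → ℝ) (s : ℝ) : ℝ :=
  (if s = 0 then sigv 1 else 0) +
  ∑ i ∈ Finset.Icc 1 M, if lamv (i - 1) < s ∧ s ≤ lamv i then sigv i else 0

/-- `𝒥_f(s) = ∫_0^s f(r) dr`. -/
def Jint (f : ℝ → ℝ) (s : ℝ) : ℝ := ∫ r in (0:ℝ)..s, f r

/-- `𝒥_f(s₁,s₂) = ∫_{s₁}^{s₂} f(r) dr`. -/
def Jint2 (f : ℝ → ℝ) (s₁ s₂ : ℝ) : ℝ := ∫ r in s₁..s₂, f r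

/-- The speed function `𝒥_{σ²}`. -/
def Jsig2 (M : ℕ) (sigv lamv : ℕ → ℝ) (s : ℝ) : ℝ := Jint (fun r => (stepFn M sigv lamv r) ^ 2) s

/-- The normalized speed function `𝒥̄_{σ²} = 𝒥_{σ²}/𝒥_{σ²}(1)`. -/
def JsigBar (M : ℕ) (sigv lamv : ℕ → ℝ) (s : ℝ) : ℝ := Jsig2 M sigv lamv s / Jsig2 M sigv lamv 1

/-- The concave hull on `[0,1]` of a function `f`, i.e. the pointwise infimum over all
concave functions dominating `f` on `[0,1]`. -/
def concaveHull (f : ℝ → ℝ) (s : ℝ) : ℝ :=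
  sInf {y | ∃ g : ℝ → ℝ, ConcaveOn ℝ (Set.Icc (0:ℝ) 1) g ∧
    (∀ t ∈ Set.Icc (0:ℝ) 1, f t ≤ g t) ∧ y = g s}

/-- The effective parameters: jump scales `0 = λ⁰ < … < λ^m = 1`, values
`σ̄_1 > … > σ̄_m > 0`, and the left-continuous non-increasing step function `σ̄`
such that `∫_0^s σ̄²` is the concavification of `𝒥_{σ²}`. -/
def EffParams (M : ℕ) (sigv lamv : ℕ → ℝ) (m : ℕ) (sigb lamb : ℕ → ℝ) (sigbar : ℝ → ℝ) : Prop :=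
  1 ≤ m ∧ m ≤ M ∧ lamb 0 = 0 ∧ lamb m = 1 ∧ (∀ j, j < m → lamb j < lamb (j + 1)) ∧
  (∀ l, 1 ≤ l → l < m → sigb (l + 1) < sigb l) ∧ (∀ l ∈ Finset.Icc 1 m, 0 < sigb l) ∧
  sigbar 0 = sigb 1 ∧
  (∀ l ∈ Finset.Icc 1 m, ∀ s : ℝ, lamb (l - 1) < s → s ≤ lamb l → sigbar s = sigb l) ∧
  (∀ s : ℝ, 0 < s → s ≤ 1 →
    concaveHull (Jsig2 M sigv lamv) s = ∫ r in (0:ℝ)..s, (sigbar r) ^ 2)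

/-- `γ* = 𝒥_{σ²/σ̄}(1)`. -/
def gammaStar (M : ℕ) (sigv lamv : ℕ → ℝ) (sigbar : ℝ → ℝ) : ℝ :=
  ∫ s in (0:ℝ)..1, (stepFn M sigv lamv s) ^ 2 / sigbar s

/-- The critical levels `γ^l = ∫_0^1 σ²(s)/σ̄(s ∧ λ^l) ds`, `γ⁰ = 0`. -/
def gammaL (M : ℕ) (sigv lamv : ℕ → ℝ) (lamb : ℕ → ℝ) (sigbar : ℝ → ℝ) (l : ℕ) : ℝ :=
  if l = 0 then 0 else ∫ s in (0:ℝ)..1, (stepFn M sigv lamv s) ^ 2 / sigbar (min s (lamb l))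

/-- `EntE` is the entropy function `𝓔` of the model. -/
def IsEntropy (M : ℕ) (sigv lamv : ℕ → ℝ) (m : ℕ) (lamb : ℕ → ℝ) (sigbar : ℝ → ℝ)
    (EntE : ℝ → ℝ) : Prop :=
  EntE 0 = 1 ∧
  ∀ l ∈ Finset.Icc 1 m, ∀ γ : ℝ,
    gammaL M sigv lamv lamb sigbar (l - 1) < γ → γ ≤ gammaL M sigv lamv lamb sigbar l →
      EntE γ = (1 - lamb (l - 1)) -
        (γ - ∫ s in (0:ℝ)..(lamb (l - 1)), (stepFn M sigv lamv s) ^ 2 / sigbar s) ^ 2 /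
          Jint2 (fun r => (stepFn M sigv lamv r) ^ 2) (lamb (l - 1)) 1

/-- The limiting free energy of the `REM(σ)` model. -/
def fREM (σ β : ℝ) : ℝ :=
  if (2 / σ) < β then 2 * (β / (2 / σ)) else 1 + (β / (2 / σ)) ^ 2

/-- The index `l_β`. -/
def lbeta (m : ℕ) (sigb : ℕ → ℝ) (β : ℝ) : ℕ :=
  if β ≤ 2 / sigb m then sInf {l : ℕ | 1 ≤ l ∧ β ≤ 2 / sigb l} else m + 1

/-- The limiting free energy `f^ψ(β)`, written with the `l_β` split. -/
def fpsiLim (m : ℕ) (sigb lamb : ℕ → ℝ) (β : ℝ) : ℝ :=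
  (∑ j ∈ Finset.Icc 1 (lbeta m sigb β - 1), (2 * β / (2 / sigb j)) * (lamb j - lamb (j - 1))) +
  ∑ j ∈ Finset.Icc (lbeta m sigb β) m, (1 + β ^ 2 / (2 / sigb j) ^ 2) * (lamb j - lamb (j - 1))

/-- The set `ℬ` of non-critical inverse temperatures. -/
def critSet (m : ℕ) (sigb : ℕ → ℝ) : Set ℝ :=
  {β | 0 < β ∧ ∀ j ∈ Finset.Icc 1 m, β ≠ 2 / sigb j}

/-- The partition function `Z_N^ψ(β)`. -/
def ZN (N M : ℕ) (sigv lamv : ℕ → ℝ) (P : MeasureTheory.Measure FieldSp) (β : ℝ) (ω : FieldSp) : ℝ :=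
  ∑ v ∈ VN N, Real.exp (β * psiFld N M sigv lamv P v ω)

/-- The free energy `f_N^ψ(β)` on `V_N`. -/
def freeEnergy (N M : ℕ) (sigv lamv : ℕ → ℝ) (P : MeasureTheory.Measure FieldSp) (β : ℝ) (ω : FieldSp) : ℝ :=
  (Real.log ((N : ℝ) ^ 2))⁻¹ * Real.log (ZN N M sigv lamv P β ω)

/-- The set `A_{N,ρ}` of points at distance at least `N^{1−ρ}` from `ℤ² ∖ V_N`. -/
def AN (N : ℕ) (ρ : ℝ) : Finset Vtx :=
  (VN N).filter fun v => ∀ z : Vtx, z ∉ VN N →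
    (N : ℝ) ^ ((1 : ℝ) - ρ) ≤ Real.sqrt (((v.1 : ℝ) - (z.1 : ℝ)) ^ 2 + ((v.2 : ℝ) - (z.2 : ℝ)) ^ 2)

/-- The restricted partition function `Z_{N,ρ}^ψ(β)`. -/
def ZNres (N M : ℕ) (sigv lamv : ℕ → ℝ) (P : MeasureTheory.Measure FieldSp) (β ρ : ℝ) (ω : FieldSp) : ℝ :=
  ∑ v ∈ AN N ρ, Real.exp (β * psiFld N M sigv lamv P v ω)

/-- The free energy `f_{N,ρ}^ψ(β)` on `A_{N,ρ}`. -/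
def freeEnergyRes (N M : ℕ) (sigv lamv : ℕ → ℝ) (P : MeasureTheory.Measure FieldSp) (β ρ : ℝ)
    (ω : FieldSp) : ℝ :=
  (Real.log ((N : ℝ) ^ 2))⁻¹ * Real.log (ZNres N M sigv lamv P β ρ ω)

/-- The Gibbs weight `𝒢_{β,N}({v})`. -/
def gibbsW (N M : ℕ) (sigv lamv : ℕ → ℝ) (P : MeasureTheory.Measure FieldSp) (β : ℝ) (v : Vtx)
    (ω : FieldSp) : ℝ :=
  Real.exp (β * psiFld N M sigv lamv P v ω) / ZN N M sigv lamv P β ω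

/-- The restricted Gibbs weight `𝒢_{β,N,ρ}({v})`. -/
def gibbsWres (N M : ℕ) (sigv lamv : ℕ → ℝ) (P : MeasureTheory.Measure FieldSp) (β ρ : ℝ) (v : Vtx)
    (ω : FieldSp) : ℝ :=
  Real.exp (β * psiFld N M sigv lamv P v ω) / ZNres N M sigv lamv P β ρ ω

/-- `E𝒢_{β,N}^{×s}[F]`: the mean over the disorder of the `s`-fold Gibbs average of `F`. -/
def gibbsExp (N M : ℕ) (sigv lamv : ℕ → ℝ) (P : MeasureTheory.Measure FieldSp) (β : ℝ) (s : ℕ)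
    (F : (Fin s → Vtx) → ℝ) : ℝ :=
  ∫ ω, (∑ vv ∈ Fintype.piFinset (fun _ : Fin s => VN N),
    (∏ i, gibbsW N M sigv lamv P β (vv i) ω) * F vv) ∂P

/-- `E𝒢_{β,N,ρ}^{×s}[F]`, with an `ω`-dependent integrand allowed. -/
def gibbsExpRes (N M : ℕ) (sigv lamv : ℕ → ℝ) (P : MeasureTheory.Measure FieldSp) (β ρ : ℝ) (s : ℕ)
    (F : (Fin s → Vtx) → FieldSp → ℝ) : ℝ :=
  ∫ ω, (∑ vv ∈ Fintype.piFinset (fun _ : Fin s => AN N ρ),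
    (∏ i, gibbsWres N M sigv lamv P β ρ (vv i) ω) * F vv ω) ∂P

/-- `E𝒢_{β,N}^{×s}[F]`, with an `ω`-dependent integrand allowed. -/
def gibbsExpW (N M : ℕ) (sigv lamv : ℕ → ℝ) (P : MeasureTheory.Measure FieldSp) (β : ℝ) (s : ℕ)
    (F : (Fin s → Vtx) → FieldSp → ℝ) : ℝ :=
  ∫ ω, (∑ vv ∈ Fintype.piFinset (fun _ : Fin s => VN N),
    (∏ i, gibbsW N M sigv lamv P β (vv i) ω) * F vv ω) ∂P

/-- The covariance `E[ψ_v ψ_{v'}]`. -/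
def psiCov (N M : ℕ) (sigv lamv : ℕ → ℝ) (P : MeasureTheory.Measure FieldSp) (v v' : Vtx) : ℝ :=
  ∫ ω, psiFld N M sigv lamv P v ω * psiFld N M sigv lamv P v' ω ∂P

/-- `C₀` is a constant witnessing the uniform variance upper bound
`max_{v∈V_N} E[ψ_v²] ≤ 𝒥_{σ²}(1) log N + C₀` for `N` large. -/
def IsVarBound (M : ℕ) (sigv lamv : ℕ → ℝ) (P : ℕ → MeasureTheory.Measure FieldSp) (C₀ : ℝ) : Prop :=
  0 < C₀ ∧ ∃ N₀ : ℕ, ∀ N ≥ N₀, ∀ v ∈ VN N,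
    psiCov N M sigv lamv (P N) v v ≤ Jsig2 M sigv lamv 1 * Real.log N + C₀

/-- The overlap `q^N(v,v')`. -/
def overlapQ (N M : ℕ) (sigv lamv : ℕ → ℝ) (P : MeasureTheory.Measure FieldSp) (C₀ : ℝ) (v v' : Vtx) : ℝ :=
  psiCov N M sigv lamv P v v' / (Jsig2 M sigv lamv 1 * Real.log N + C₀)

/-- Convergence in probability to a constant, for a sequence of random variables on a
sequence of probability spaces. -/
def TendstoInProb (P : ℕ → MeasureTheory.Measure FieldSp) (X : ℕ → FieldSp → ℝ) (c : ℝ) : Prop :=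
  ∀ ε : ℝ, 0 < ε → Tendsto (fun N => P N {ω | ε < |X N ω - c|}) atTop (nhds 0)

/-- Convergence in `L^p` to a constant. -/
def TendstoLp (P : ℕ → MeasureTheory.Measure FieldSp) (X : ℕ → FieldSp → ℝ) (p c : ℝ) : Prop :=
  Tendsto (fun N => ∫ ω, |X N ω - c| ^ p ∂(P N)) atTop (nhds 0)

/-- The branching scale `b_N(v,v')`. -/
def bScale (N : ℕ) (v v' : Vtx) : ℝ :=
  sSup {lam : ℝ | lam ∈ Set.Icc (0:ℝ) 1 ∧ ((nbhd N lam v) ∩ (nbhd N lam v')).Nonempty}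

end GFFCommon

/-!
On `(γ^k, γ^{k+1}]` the entropy is the parabola `(1 - λ^k) - (γ - A_k)² / C_k`, where
`A_k = 𝒥_{σ²/σ̄}(λ^k)` and `C_k = 𝒥_{σ²}(λ^k, 1) > 0`, so it suffices that consecutive parabolas
agree to first order at `γ^{k+1}`. Splitting the integral defining `γ^{k+1}` at `λ^{k+1}` gives
`γ^{k+1} - A_k = C_k / σ̄_{k+1}` and `γ^{k+1} - A_{k+1} = C_{k+1} / σ̄_{k+1}`, so both slopes
equal `-2 / σ̄_{k+1}`, and the values agree iff `𝒥_{σ²}(λ^k, λ^{k+1}) = σ̄_{k+1}² (λ^{k+1} - λ^k)`,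
i.e. iff the concave hull `∫₀ σ̄²` touches `𝒥_{σ²}` at the jump points of `σ̄`. It does: were it
strictly above `𝒥_{σ²}` at such a corner, cutting the corner off by a line of intermediate slope
would give a smaller concave majorant.
-/

open Set MeasureTheory

theorem exists_lt_mem_Ioc_of_lt_of_le {α : Type*} [LinearOrder α] {x : ℕ → α} {s : α} {n : ℕ}
    (h₀ : x 0 < s) (hn : s ≤ x n) : ∃ i < n, s ∈ Ioc (x i) (x (i + 1)) := by
  induction n with
  | zero => exact absurd hn (not_le.2 h₀)
  | succ n ih =>
    by_cases h : s ≤ x n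
    · obtain ⟨i, hi, hs⟩ := ih h
      exact ⟨i, by omega, hs⟩
    · exact ⟨n, n.lt_succ_self, not_le.1 h, hn⟩

theorem intervalIntegrable_of_eqOn_Ioo_pieces {f : ℝ → ℝ} {g : ℕ → ℝ → ℝ} {x : ℕ → ℝ} {n : ℕ}
    (hx : ∀ k < n, x k ≤ x (k + 1))
    (hg : ∀ k < n, IntervalIntegrable (g k) volume (x k) (x (k + 1)))
    (hfg : ∀ k < n, EqOn f (g k) (Ioo (x k) (x (k + 1)))) :
    IntervalIntegrable f volume (x 0) (x n) :=
  IntervalIntegrable.trans_iterate fun k hk =>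
    (hg k hk).congr_uIoo (by rw [uIoo_of_le (hx k hk)]; exact (hfg k hk).symm)

theorem integral_le_mul_sub_of_le_of_le {g : ℝ → ℝ} {p t b : ℝ}
    (hg : IntervalIntegrable g volume p t)
    (hleft : ∀ r ∈ Ioo t p, b ≤ g r) (hright : ∀ r ∈ Ioo p t, g r ≤ b) :
    ∫ r in p..t, g r ≤ b * (t - p) := by
  rcases le_total p t with hpt | htp
  · calc ∫ r in p..t, g r ≤ ∫ _ in p..t, b :=
          intervalIntegral.integral_mono_on_of_le_Ioo hpt hg intervalIntegrable_const hright
      _ = b * (t - p) := by rw [intervalIntegral.integral_const, smul_eq_mul, mul_comm]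
  · have : ∫ _ in t..p, b ≤ ∫ r in t..p, g r :=
      intervalIntegral.integral_mono_on_of_le_Ioo htp intervalIntegrable_const hg.symm hleft
    rw [intervalIntegral.integral_const, smul_eq_mul] at this
    rw [intervalIntegral.integral_symm]
    linarith

theorem concaveOn_add_mul_sub {s : Set ℝ} (hs : Convex ℝ s) (c b p : ℝ) :
    ConcaveOn ℝ s fun t => c + b * (t - p) :=
  ⟨hs, fun x _ y _ a a' _ _ hab => le_of_eq <| by
    simp only [smul_eq_mul]
    linear_combination (c - b * p) * hab⟩

theorem le_concaveHull {f : ℝ → ℝ} (hf : BddAbove (f '' Icc 0 1)) {t : ℝ}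
    (ht : t ∈ Icc (0 : ℝ) 1) : f t ≤ concaveHull f t := by
  refine le_csInf ⟨_, fun _ => sSup (f '' Icc 0 1), concaveOn_const _ (convex_Icc 0 1),
    fun u hu => le_csSup hf (mem_image_of_mem f hu), rfl⟩ ?_
  rintro _ ⟨g, -, hg, rfl⟩
  exact hg t ht

theorem concaveHull_le {f g : ℝ → ℝ} (hg : ConcaveOn ℝ (Icc 0 1) g)
    (hfg : ∀ t ∈ Icc (0 : ℝ) 1, f t ≤ g t) {s : ℝ} (hs : s ∈ Icc (0 : ℝ) 1) :
    concaveHull f s ≤ g s :=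
  csInf_le ⟨f s, by rintro _ ⟨g', -, hg', rfl⟩; exact hg' s hs⟩ ⟨g, hg, hfg, rfl⟩

theorem concaveHull_lt_of_le_two_lines {f : ℝ → ℝ} {p c b₁ b₂ : ℝ} (hp : p ∈ Icc (0 : ℝ) 1)
    (hf : ContinuousWithinAt f (Icc 0 1) p) (hb : b₂ < b₁)
    (h₁ : ∀ t ∈ Icc (0 : ℝ) 1, f t ≤ c + b₁ * (t - p))
    (h₂ : ∀ t ∈ Icc (0 : ℝ) 1, f t ≤ c + b₂ * (t - p)) (hfp : f p < c) :
    concaveHull f p < c := by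
  -- The line through `(p, c - η)` of slope `(b₁ + b₂) / 2` dominates `f` near `p` by continuity
  -- of `f`, and away from `p` because it lies above one of the two given lines there.
  set d := c - f p
  have hφ : ContinuousWithinAt (fun t => f t - (b₁ + b₂) / 2 * (t - p)) (Icc 0 1) p := by
    fun_prop
  obtain ⟨δ, hδ, hnear⟩ := Metric.continuousWithinAt_iff.1 hφ (d / 2) (by simp [d]; linarith)
  set η := min (d / 2) ((b₁ - b₂) / 2 * δ)
  have hη : 0 < η := lt_min (by simp [d]; linarith) (mul_pos (by linarith) hδ)
  have hηd : η ≤ d / 2 := min_le_left _ _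
  have hηδ : η ≤ (b₁ - b₂) / 2 * δ := min_le_right _ _
  have hκ : 0 ≤ (b₁ - b₂) / 2 := by linarith
  have hline : ∀ t ∈ Icc (0 : ℝ) 1, f t ≤ c - η + (b₁ + b₂) / 2 * (t - p) := by
    intro t ht
    by_cases htp : dist t p < δ
    · have := (abs_lt.1 (Real.dist_eq _ _ ▸ hnear ht htp)).2
      simp only [sub_self, mul_zero, sub_zero] at this
      linarith
    · rw [Real.dist_eq, not_lt, le_abs'] at htp
      rcases htp with htp | htp
      · have := mul_le_mul_of_nonneg_left (show δ ≤ p - t by linarith) hκ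
        linarith [h₁ t ht]
      · have := mul_le_mul_of_nonneg_left htp hκ
        linarith [h₂ t ht]
  calc concaveHull f p
      ≤ min (min (c + b₁ * (p - p)) (c + b₂ * (p - p))) (c - η + (b₁ + b₂) / 2 * (p - p)) :=
        concaveHull_le (((concaveOn_add_mul_sub (convex_Icc 0 1) c b₁ p).inf
          (concaveOn_add_mul_sub (convex_Icc 0 1) c b₂ p)).inf
          (concaveOn_add_mul_sub (convex_Icc 0 1) (c - η) ((b₁ + b₂) / 2) p))
          (fun t ht => le_min (le_min (h₁ t ht) (h₂ t ht)) (hline t ht)) hp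
    _ < c := by simp [hη]

theorem hasDerivWithinAt_union_of_isClosed {f f' : ℝ → ℝ} {s t : Set ℝ} (hs : IsClosed s)
    (ht : IsClosed t) (hfs : ∀ x ∈ s, HasDerivWithinAt f (f' x) s x)
    (hft : ∀ x ∈ t, HasDerivWithinAt f (f' x) t x) :
    ∀ x ∈ s ∪ t, HasDerivWithinAt f (f' x) (s ∪ t) x := by
  classical
  refine fun x _ => .union ?_ ?_
  · exact if hx : x ∈ s then hfs x hx
      else HasFDerivWithinAt.of_notMem_closure (by rwa [hs.closure_eq])
  · exact if hx : x ∈ t then hft x hx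
      else HasFDerivWithinAt.of_notMem_closure (by rwa [ht.closure_eq])

theorem hasDerivWithinAt_Icc_piecewise {f f₁' f₂' : ℝ → ℝ} {a b c : ℝ} (hab : a ≤ b)
    (hbc : b ≤ c) (h₁ : ∀ y ∈ Icc a b, HasDerivWithinAt f (f₁' y) (Icc a b) y)
    (h₂ : ∀ y ∈ Icc b c, HasDerivWithinAt f (f₂' y) (Icc b c) y) (h₁₂ : f₁' b = f₂' b) :
    ∀ y ∈ Icc a c, HasDerivWithinAt f (if y ≤ b then f₁' y else f₂' y) (Icc a c) y := by
  rw [← Icc_union_Icc_eq_Icc hab hbc]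
  refine hasDerivWithinAt_union_of_isClosed (f' := fun y => if y ≤ b then f₁' y else f₂' y)
    isClosed_Icc isClosed_Icc (fun y hy => ?_) (fun y hy => ?_)
  · simpa [hy.2] using h₁ y hy
  · rcases hy.1.eq_or_lt with rfl | hby
    · simpa [h₁₂] using h₂ _ hy
    · simpa [not_le.2 hby] using h₂ y hy

theorem continuousOn_Icc_piecewise {g₁ g₂ : ℝ → ℝ} {a b c : ℝ} (hab : a ≤ b) (hbc : b ≤ c)
    (h₁ : ContinuousOn g₁ (Icc a b)) (h₂ : ContinuousOn g₂ (Icc b c)) (h₁₂ : g₁ b = g₂ b) :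
    ContinuousOn (fun y => if y ≤ b then g₁ y else g₂ y) (Icc a c) := by
  rw [← Icc_union_Icc_eq_Icc hab hbc]
  refine ContinuousOn.union_of_isClosed (h₁.congr fun y hy => if_pos hy.2)
    (h₂.congr fun y hy => ?_) isClosed_Icc isClosed_Icc
  rcases hy.1.eq_or_lt with rfl | hby
  · simp [h₁₂]
  · simp [not_le.2 hby]

theorem eqOn_Icc_of_eqOn_Ioc_pieces {f : ℝ → ℝ} {q : ℕ → ℝ → ℝ} {x : ℕ → ℝ} {n : ℕ}
    (hx : ∀ k < n, x k < x (k + 1)) (hf₀ : f (x 0) = q 0 (x 0))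
    (hf : ∀ k < n, EqOn f (q k) (Ioc (x k) (x (k + 1))))
    (hval : ∀ k, k + 1 < n → q k (x (k + 1)) = q (k + 1) (x (k + 1))) {k : ℕ} (hk : k < n) :
    EqOn f (q k) (Icc (x k) (x (k + 1))) := by
  intro y hy
  rcases hy.1.eq_or_lt with rfl | hy'
  · rcases k with _ | j
    · exact hf₀
    · rw [hf j (by omega) ⟨hx j (by omega), le_rfl⟩, hval j hk]
  · exact hf k hk ⟨hy', hy.2⟩

theorem exists_hasDerivWithinAt_continuousOn_of_piecewise {f : ℝ → ℝ} {q q' : ℕ → ℝ → ℝ}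
    {x : ℕ → ℝ} {n : ℕ} (hn : 1 ≤ n) (hx : ∀ k < n, x k < x (k + 1))
    (hq : ∀ k < n, ∀ y, HasDerivAt (q k) (q' k y) y) (hq' : ∀ k < n, Continuous (q' k))
    (hf₀ : f (x 0) = q 0 (x 0)) (hf : ∀ k < n, EqOn f (q k) (Ioc (x k) (x (k + 1))))
    (hval : ∀ k, k + 1 < n → q k (x (k + 1)) = q (k + 1) (x (k + 1)))
    (hder : ∀ k, k + 1 < n → q' k (x (k + 1)) = q' (k + 1) (x (k + 1))) :
    ∃ f' : ℝ → ℝ, (∀ y ∈ Icc (x 0) (x n), HasDerivWithinAt f (f' y) (Icc (x 0) (x n)) y) ∧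
      ContinuousOn f' (Icc (x 0) (x n)) := by
  have hpiece (k : ℕ) (hk : k < n) (y : ℝ) (hy : y ∈ Icc (x k) (x (k + 1))) :
      HasDerivWithinAt f (q' k y) (Icc (x k) (x (k + 1))) y :=
    (hq k hk y).hasDerivWithinAt.congr_of_mem (eqOn_Icc_of_eqOn_Ioc_pieces hx hf₀ hf hval hk) hy
  suffices ∀ j, 1 ≤ j → j ≤ n → ∃ f' : ℝ → ℝ,
      (∀ y ∈ Icc (x 0) (x j), HasDerivWithinAt f (f' y) (Icc (x 0) (x j)) y) ∧
      ContinuousOn f' (Icc (x 0) (x j)) ∧ f' (x j) = q' (j - 1) (x j) from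
    (this n hn le_rfl).imp fun _ h => ⟨h.1, h.2.1⟩
  intro j hj
  induction j, hj using Nat.le_induction with
  | base => exact fun h1 => ⟨q' 0, hpiece 0 h1, (hq' 0 h1).continuousOn, rfl⟩
  | succ j hj ih =>
    intro hjn
    obtain ⟨f', hf', hc, hfj⟩ := ih (by omega)
    have h0j : x 0 ≤ x j :=
      (strictMonoOn_Iic_of_lt_succ hx).monotoneOn (by simp) (by simp; omega) (Nat.zero_le j)
    have hjj : x j < x (j + 1) := hx j (by omega)
    have hmatch : f' (x j) = q' j (x j) := by
      rw [hfj]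
      simpa [Nat.sub_add_cancel hj] using hder (j - 1) (by omega)
    refine ⟨fun y => if y ≤ x j then f' y else q' j y,
      hasDerivWithinAt_Icc_piecewise h0j hjj.le hf' (hpiece j (by omega)) hmatch,
      continuousOn_Icc_piecewise h0j hjj.le hc (hq' j (by omega)).continuousOn hmatch, ?_⟩
    simp [not_le.2 hjj]

theorem hasDerivAt_sub_sub_sq_div (l a c x : ℝ) :
    HasDerivAt (fun y => l - (y - a) ^ 2 / c) (-2 * (x - a) / c) x :=
  ((((hasDerivAt_id' x).sub_const a).fun_pow 2).div_const c).const_sub l |>.congr_deriv (by ring)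

theorem sub_sq_div_eq_and_of_sub_eq_div {γ a a' c c' s l l' : ℝ} (hc : c ≠ 0) (hc' : c' ≠ 0)
    (hs : s ≠ 0) (ha : γ - a = c / s) (ha' : γ - a' = c' / s) (hl : c - c' = s ^ 2 * (l' - l)) :
    1 - l - (γ - a) ^ 2 / c = 1 - l' - (γ - a') ^ 2 / c' ∧
      -2 * (γ - a) / c = -2 * (γ - a') / c' := by
  rw [ha, ha']
  constructor
  · field_simp
    linear_combination -hl
  · field_simp

section StepFunction

variable {M : ℕ} {sigv lamv : ℕ → ℝ}

theorem measurable_stepFn : Measurable (stepFn M sigv lamv) :=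
  (Measurable.ite (measurableSet_singleton 0) measurable_const measurable_const).add
    (Finset.measurable_sum _ fun _ _ =>
      Measurable.ite measurableSet_Ioc measurable_const measurable_const)

theorem abs_stepFn_le (s : ℝ) :
    |stepFn M sigv lamv s| ≤ |sigv 1| + ∑ i ∈ Finset.Icc 1 M, |sigv i| := by
  refine (abs_add_le _ _).trans (add_le_add ?_ ((Finset.abs_sum_le_sum_abs _ _).trans
    (Finset.sum_le_sum fun i _ => ?_))) <;> split_ifs <;> simp

theorem intervalIntegrable_stepFn_sq (a b : ℝ) :
    IntervalIntegrable (fun s => stepFn M sigv lamv s ^ 2) volume a b := by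
  rw [intervalIntegrable_iff]
  refine Measure.integrableOn_of_bounded measure_Ioc_lt_top.ne
    (measurable_stepFn.pow_const 2).aestronglyMeasurable
    (M := (|sigv 1| + ∑ i ∈ Finset.Icc 1 M, |sigv i|) ^ 2) (ae_of_all _ fun s => ?_)
  rw [norm_pow, Real.norm_eq_abs]
  exact pow_le_pow_left₀ (abs_nonneg _) (abs_stepFn_le s) 2

theorem continuous_Jsig2 : Continuous (Jsig2 M sigv lamv) :=
  intervalIntegral.continuous_primitive intervalIntegrable_stepFn_sq 0

theorem ScaleParams.stepFn_pos (hp : ScaleParams M sigv lamv) {s : ℝ}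
    (hs : s ∈ Ioc (0 : ℝ) 1) : 0 < stepFn M sigv lamv s := by
  obtain ⟨-, hσ, h₀, h₁, -⟩ := hp
  obtain ⟨i, hi, hsi⟩ := exists_lt_mem_Ioc_of_lt_of_le (x := lamv) (h₀ ▸ hs.1) (h₁ ▸ hs.2)
  rw [stepFn, if_neg hs.1.ne', zero_add]
  refine Finset.sum_pos' (fun k hk => ?_) ⟨i + 1, by simp; omega, ?_⟩
  · split_ifs
    exacts [(hσ k hk).le, le_rfl]
  · simpa [hsi.1, hsi.2] using hσ (i + 1) (by simp; omega)

end StepFunction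

namespace EffParams

variable {M m : ℕ} {sigv lamv sigb lamb : ℕ → ℝ} {sigbar : ℝ → ℝ}

theorem lamb_zero (he : EffParams M sigv lamv m sigb lamb sigbar) : lamb 0 = 0 := he.2.2.1

theorem lamb_last (he : EffParams M sigv lamv m sigb lamb sigbar) : lamb m = 1 := he.2.2.2.1

theorem lamb_lt_succ (he : EffParams M sigv lamv m sigb lamb sigbar) {k : ℕ} (hk : k < m) :
    lamb k < lamb (k + 1) :=
  he.2.2.2.2.1 k hk

theorem sigb_succ_lt (he : EffParams M sigv lamv m sigb lamb sigbar) {k : ℕ} (hk : k + 1 < m) :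
    sigb (k + 2) < sigb (k + 1) :=
  he.2.2.2.2.2.1 (k + 1) (by omega) hk

theorem sigb_pos (he : EffParams M sigv lamv m sigb lamb sigbar) {k : ℕ} (hk : k < m) :
    0 < sigb (k + 1) :=
  he.2.2.2.2.2.2.1 (k + 1) (by simp; omega)

theorem sigbar_eq (he : EffParams M sigv lamv m sigb lamb sigbar) {k : ℕ} (hk : k < m) {r : ℝ}
    (hr : r ∈ Ioc (lamb k) (lamb (k + 1))) : sigbar r = sigb (k + 1) :=
  he.2.2.2.2.2.2.2.2.1 (k + 1) (by simp; omega) r hr.1 hr.2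

theorem concaveHull_eq (he : EffParams M sigv lamv m sigb lamb sigbar) {s : ℝ}
    (hs : s ∈ Ioc (0 : ℝ) 1) :
    concaveHull (Jsig2 M sigv lamv) s = ∫ r in 0..s, sigbar r ^ 2 :=
  he.2.2.2.2.2.2.2.2.2 s hs.1 hs.2

theorem monotoneOn_lamb (he : EffParams M sigv lamv m sigb lamb sigbar) :
    MonotoneOn lamb (Iic m) :=
  (strictMonoOn_Iic_of_lt_succ he.2.2.2.2.1).monotoneOn

theorem lamb_mem_Icc (he : EffParams M sigv lamv m sigb lamb sigbar) {k : ℕ} (hk : k ≤ m) :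
    lamb k ∈ Icc (0 : ℝ) 1 :=
  ⟨he.lamb_zero ▸ he.monotoneOn_lamb (by simp) hk (Nat.zero_le k),
    he.lamb_last ▸ he.monotoneOn_lamb hk (le_refl m) hk⟩

theorem exists_sigbar_eq (he : EffParams M sigv lamv m sigb lamb sigbar) {r : ℝ}
    (hr : r ∈ Ioc (0 : ℝ) 1) :
    ∃ k < m, r ∈ Ioc (lamb k) (lamb (k + 1)) ∧ sigbar r = sigb (k + 1) := by
  obtain ⟨k, hk, hrk⟩ :=
    exists_lt_mem_Ioc_of_lt_of_le (x := lamb) (he.lamb_zero ▸ hr.1) (he.lamb_last ▸ hr.2)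
  exact ⟨k, hk, hrk, he.sigbar_eq hk hrk⟩

theorem sigbar_pos (he : EffParams M sigv lamv m sigb lamb sigbar) {r : ℝ}
    (hr : r ∈ Ioc (0 : ℝ) 1) : 0 < sigbar r := by
  obtain ⟨k, hk, -, hkr⟩ := he.exists_sigbar_eq hr
  exact hkr ▸ he.sigb_pos hk

theorem antitoneOn_sigbar (he : EffParams M sigv lamv m sigb lamb sigbar) :
    AntitoneOn sigbar (Ioc 0 1) := by
  intro r hr r' hr' hrr'
  obtain ⟨k, hk, hrk, hkr⟩ := he.exists_sigbar_eq hr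
  obtain ⟨k', hk', hrk', hkr'⟩ := he.exists_sigbar_eq hr'
  have hkk' : k ≤ k' := by
    by_contra! h
    have := he.monotoneOn_lamb (show k' + 1 ∈ Iic m by simp; omega)
      (show k ∈ Iic m by simp; omega) (by omega)
    linarith [hrk.1, hrk'.2]
  rw [hkr, hkr']
  exact (strictAntiOn_Iic_of_succ_lt (ψ := fun k => sigb (k + 1)) (n := m - 1)
    fun l hl => he.sigb_succ_lt (by omega)).antitoneOn
    (show k ∈ Iic (m - 1) by simp; omega) (show k' ∈ Iic (m - 1) by simp; omega) hkk'

theorem sigb_sq_le_sigbar_sq (he : EffParams M sigv lamv m sigb lamb sigbar) {j : ℕ} (hj : j < m)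
    {r : ℝ} (hr : r ∈ Ioc 0 (lamb (j + 1))) : sigb (j + 1) ^ 2 ≤ sigbar r ^ 2 := by
  have hj₁ : lamb (j + 1) ∈ Ioc (0 : ℝ) 1 := ⟨hr.1.trans_le hr.2, (he.lamb_mem_Icc hj).2⟩
  have := he.antitoneOn_sigbar ⟨hr.1, hr.2.trans hj₁.2⟩ hj₁ hr.2
  rw [he.sigbar_eq hj ⟨he.lamb_lt_succ hj, le_rfl⟩] at this
  exact pow_le_pow_left₀ (he.sigb_pos hj).le this 2

theorem sigbar_sq_le_sigb_sq (he : EffParams M sigv lamv m sigb lamb sigbar) {j : ℕ} (hj : j < m)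
    {r : ℝ} (hr : r ∈ Ioc (lamb j) 1) : sigbar r ^ 2 ≤ sigb (j + 1) ^ 2 := by
  have hj₀ := (he.lamb_mem_Icc hj.le).1
  have hr₀ : r ∈ Ioc (0 : ℝ) 1 := ⟨hj₀.trans_lt hr.1, hr.2⟩
  have hr' : min r (lamb (j + 1)) ∈ Ioc (lamb j) (lamb (j + 1)) :=
    ⟨lt_min hr.1 (he.lamb_lt_succ hj), min_le_right _ _⟩
  have := he.antitoneOn_sigbar ⟨hj₀.trans_lt hr'.1, (min_le_left _ _).trans hr.2⟩ hr₀
    (min_le_left _ _)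
  rw [he.sigbar_eq hj hr'] at this
  exact pow_le_pow_left₀ (he.sigbar_pos hr₀).le this 2

theorem intervalIntegrable_sigbar_sq (he : EffParams M sigv lamv m sigb lamb sigbar) {a b : ℝ}
    (ha : a ∈ Icc (0 : ℝ) 1) (hb : b ∈ Icc (0 : ℝ) 1) :
    IntervalIntegrable (fun r => sigbar r ^ 2) volume a b := by
  have h01 : IntervalIntegrable (fun r => sigbar r ^ 2) volume 0 1 := by
    rw [← he.lamb_zero, ← he.lamb_last]
    exact intervalIntegrable_of_eqOn_Ioo_pieces (g := fun k _ => sigb (k + 1) ^ 2)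
      (fun k hk => (he.lamb_lt_succ hk).le) (fun _ _ => intervalIntegrable_const)
      (fun k hk r hr => by simp [he.sigbar_eq hk (Ioo_subset_Ioc_self hr)])
  rw [← uIcc_of_le zero_le_one] at ha hb
  exact h01.mono_set (uIcc_subset_uIcc ha hb)

theorem intervalIntegrable_sq_div_sigbar (he : EffParams M sigv lamv m sigb lamb sigbar)
    {a b : ℝ} (ha : a ∈ Icc (0 : ℝ) 1) (hb : b ∈ Icc (0 : ℝ) 1) :
    IntervalIntegrable (fun s => stepFn M sigv lamv s ^ 2 / sigbar s) volume a b := by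
  have h01 : IntervalIntegrable (fun s => stepFn M sigv lamv s ^ 2 / sigbar s) volume 0 1 := by
    rw [← he.lamb_zero, ← he.lamb_last]
    exact intervalIntegrable_of_eqOn_Ioo_pieces
      (g := fun k s => stepFn M sigv lamv s ^ 2 / sigb (k + 1))
      (fun k hk => (he.lamb_lt_succ hk).le)
      (fun _ _ => (intervalIntegrable_stepFn_sq _ _).div_const _)
      (fun k hk r hr => by simp [he.sigbar_eq hk (Ioo_subset_Ioc_self hr)])
  rw [← uIcc_of_le zero_le_one] at ha hb
  exact h01.mono_set (uIcc_subset_uIcc ha hb)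

theorem integral_sigbar_sq_piece (he : EffParams M sigv lamv m sigb lamb sigbar) {k : ℕ}
    (hk : k < m) :
    ∫ r in lamb k..lamb (k + 1), sigbar r ^ 2 = sigb (k + 1) ^ 2 * (lamb (k + 1) - lamb k) := by
  rw [intervalIntegral.integral_congr_Ioo_of_le (g := fun _ => sigb (k + 1) ^ 2)
    (he.lamb_lt_succ hk).le (fun r hr => by simp [he.sigbar_eq hk (Ioo_subset_Ioc_self hr)]),
    intervalIntegral.integral_const, smul_eq_mul, mul_comm]

theorem integral_sq_div_sigbar_piece (he : EffParams M sigv lamv m sigb lamb sigbar) {k : ℕ}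
    (hk : k < m) :
    ∫ s in lamb k..lamb (k + 1), stepFn M sigv lamv s ^ 2 / sigbar s =
      (∫ s in lamb k..lamb (k + 1), stepFn M sigv lamv s ^ 2) / sigb (k + 1) := by
  rw [← intervalIntegral.integral_div]
  exact intervalIntegral.integral_congr_Ioo_of_le (he.lamb_lt_succ hk).le
    (fun r hr => by simp [he.sigbar_eq hk (Ioo_subset_Ioc_self hr)])

theorem Jsig2_le_integral_sigbar_sq (he : EffParams M sigv lamv m sigb lamb sigbar) {t : ℝ}
    (ht : t ∈ Icc (0 : ℝ) 1) : Jsig2 M sigv lamv t ≤ ∫ r in 0..t, sigbar r ^ 2 := by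
  rcases ht.1.eq_or_lt with rfl | ht₀
  · simp [Jsig2, Jint]
  · rw [← he.concaveHull_eq ⟨ht₀, ht.2⟩]
    exact le_concaveHull (isCompact_Icc.bddAbove_image continuous_Jsig2.continuousOn) ht

theorem integral_sigbar_sq_le_add_mul (he : EffParams M sigv lamv m sigb lamb sigbar) {j : ℕ}
    (hj : j + 1 < m) {b : ℝ} (hb₂ : sigb (j + 2) ^ 2 ≤ b) (hb₁ : b ≤ sigb (j + 1) ^ 2) {t : ℝ}
    (ht : t ∈ Icc (0 : ℝ) 1) :
    ∫ r in 0..t, sigbar r ^ 2 ≤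
      (∫ r in 0..lamb (j + 1), sigbar r ^ 2) + b * (t - lamb (j + 1)) := by
  have hp := he.lamb_mem_Icc hj.le
  have hpt := he.intervalIntegrable_sigbar_sq hp ht
  rw [← intervalIntegral.integral_add_adjacent_intervals
    (he.intervalIntegrable_sigbar_sq ⟨le_rfl, zero_le_one⟩ hp) hpt]
  refine (add_le_add_iff_left _).2 (integral_le_mul_sub_of_le_of_le hpt
    (fun r hr => hb₁.trans (he.sigb_sq_le_sigbar_sq (by omega) ⟨ht.1.trans_lt hr.1, hr.2.le⟩))
    (fun r hr => (he.sigbar_sq_le_sigb_sq hj ⟨hr.1, hr.2.le.trans ht.2⟩).trans hb₂))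

theorem Jsig2_lamb (he : EffParams M sigv lamv m sigb lamb sigbar) {j : ℕ} (hj : j < m) :
    Jsig2 M sigv lamv (lamb j) = ∫ r in 0..lamb j, sigbar r ^ 2 := by
  rcases j with _ | j
  · simp [Jsig2, Jint, he.lamb_zero]
  have hp := he.lamb_mem_Icc hj.le
  have hp₀ : 0 < lamb (j + 1) :=
    (he.lamb_mem_Icc (by omega)).1.trans_lt (he.lamb_lt_succ (by omega))
  refine le_antisymm (he.Jsig2_le_integral_sigbar_sq hp) (not_lt.1 fun hlt => ?_)
  have hb : sigb (j + 2) ^ 2 < sigb (j + 1) ^ 2 :=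
    pow_lt_pow_left₀ (he.sigb_succ_lt hj) (he.sigb_pos hj).le two_ne_zero
  have := concaveHull_lt_of_le_two_lines hp continuous_Jsig2.continuousWithinAt hb
    (fun t ht => (he.Jsig2_le_integral_sigbar_sq ht).trans
      (he.integral_sigbar_sq_le_add_mul hj hb.le le_rfl ht))
    (fun t ht => (he.Jsig2_le_integral_sigbar_sq ht).trans
      (he.integral_sigbar_sq_le_add_mul hj le_rfl hb.le ht)) hlt
  exact (he.concaveHull_eq ⟨hp₀, hp.2⟩ ▸ this).false

theorem gammaL_succ_sub_integral_lamb_succ (he : EffParams M sigv lamv m sigb lamb sigbar)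
    {k : ℕ} (hk : k < m) :
    gammaL M sigv lamv lamb sigbar (k + 1) -
        ∫ s in 0..lamb (k + 1), stepFn M sigv lamv s ^ 2 / sigbar s =
      (∫ s in lamb (k + 1)..1, stepFn M sigv lamv s ^ 2) / sigb (k + 1) := by
  have hp := he.lamb_mem_Icc (show k + 1 ≤ m by omega)
  set g := fun s => stepFn M sigv lamv s ^ 2 / sigbar (min s (lamb (k + 1)))
  have hleft : EqOn (fun s => stepFn M sigv lamv s ^ 2 / sigbar s) g (uIoo 0 (lamb (k + 1))) := by
    intro s hs
    rw [uIoo_of_le hp.1] at hs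
    simp [g, min_eq_left hs.2.le]
  have hright : EqOn (fun s => stepFn M sigv lamv s ^ 2 / sigb (k + 1)) g
      (uIoo (lamb (k + 1)) 1) := by
    intro s hs
    rw [uIoo_of_le hp.2] at hs
    simp [g, min_eq_right hs.1.le, he.sigbar_eq hk ⟨he.lamb_lt_succ hk, le_rfl⟩]
  rw [gammaL, if_neg (Nat.succ_ne_zero k), ← intervalIntegral.integral_add_adjacent_intervals
    ((he.intervalIntegrable_sq_div_sigbar ⟨le_rfl, zero_le_one⟩ hp).congr_uIoo hleft)
    (((intervalIntegrable_stepFn_sq _ _).div_const _).congr_uIoo hright),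
    ← intervalIntegral.integral_congr_uIoo hleft, ← intervalIntegral.integral_congr_uIoo hright,
    intervalIntegral.integral_div, add_sub_cancel_left]

theorem gammaL_succ_sub_integral_lamb (he : EffParams M sigv lamv m sigb lamb sigbar) {k : ℕ}
    (hk : k < m) :
    gammaL M sigv lamv lamb sigbar (k + 1) -
        ∫ s in 0..lamb k, stepFn M sigv lamv s ^ 2 / sigbar s =
      (∫ s in lamb k..1, stepFn M sigv lamv s ^ 2) / sigb (k + 1) := by
  have hk₀ := he.lamb_mem_Icc hk.le
  have hA := intervalIntegral.integral_add_adjacent_intervals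
    (he.intervalIntegrable_sq_div_sigbar ⟨le_rfl, zero_le_one⟩ hk₀)
    (he.intervalIntegrable_sq_div_sigbar hk₀ (he.lamb_mem_Icc (show k + 1 ≤ m by omega)))
  rw [he.integral_sq_div_sigbar_piece hk] at hA
  rw [← intervalIntegral.integral_add_adjacent_intervals (intervalIntegrable_stepFn_sq _ _)
    (intervalIntegrable_stepFn_sq _ _) (b := lamb (k + 1)), add_div]
  linarith [he.gammaL_succ_sub_integral_lamb_succ hk]

theorem integral_stepFn_sq_sub_succ (he : EffParams M sigv lamv m sigb lamb sigbar) {k : ℕ}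
    (hk : k + 1 < m) :
    (∫ s in lamb k..1, stepFn M sigv lamv s ^ 2) -
        ∫ s in lamb (k + 1)..1, stepFn M sigv lamv s ^ 2 =
      sigb (k + 1) ^ 2 * (lamb (k + 1) - lamb k) := by
  have hC := intervalIntegral.integral_interval_sub_left
    (intervalIntegrable_stepFn_sq (M := M) (sigv := sigv) (lamv := lamv) (lamb k) 1)
    (intervalIntegrable_stepFn_sq (lamb k) (lamb (k + 1)))
  have hJ := intervalIntegral.integral_interval_sub_left
    (intervalIntegrable_stepFn_sq (M := M) (sigv := sigv) (lamv := lamv) 0 (lamb (k + 1)))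
    (intervalIntegrable_stepFn_sq 0 (lamb k))
  have hH := intervalIntegral.integral_interval_sub_left
    (he.intervalIntegrable_sigbar_sq ⟨le_rfl, zero_le_one⟩ (he.lamb_mem_Icc hk.le))
    (he.intervalIntegrable_sigbar_sq ⟨le_rfl, zero_le_one⟩ (he.lamb_mem_Icc (show k ≤ m by omega)))
  have h₁ := he.Jsig2_lamb hk
  have h₀ := he.Jsig2_lamb (show k < m by omega)
  simp only [Jsig2, Jint] at h₁ h₀
  linarith [he.integral_sigbar_sq_piece (show k < m by omega)]

theorem integral_stepFn_sq_pos (he : EffParams M sigv lamv m sigb lamb sigbar)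
    (hp : ScaleParams M sigv lamv) {k : ℕ} (hk : k < m) :
    0 < ∫ s in lamb k..1, stepFn M sigv lamv s ^ 2 := by
  have hk₀ := he.lamb_mem_Icc hk.le
  have hk₁ : lamb k < 1 :=
    (he.lamb_lt_succ hk).trans_le (he.lamb_mem_Icc (show k + 1 ≤ m by omega)).2
  exact intervalIntegral.intervalIntegral_pos_of_pos_on (intervalIntegrable_stepFn_sq _ _)
    (fun s hs => pow_pos (hp.stepFn_pos ⟨hk₀.1.trans_lt hs.1, hs.2.le⟩) 2) hk₁

theorem gammaL_lt_succ (he : EffParams M sigv lamv m sigb lamb sigbar)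
    (hp : ScaleParams M sigv lamv) {k : ℕ} (hk : k < m) :
    gammaL M sigv lamv lamb sigbar k < gammaL M sigv lamv lamb sigbar (k + 1) := by
  have hC := he.integral_stepFn_sq_pos hp hk
  have hγ := he.gammaL_succ_sub_integral_lamb hk
  rcases k with _ | k
  · simp only [he.lamb_zero, intervalIntegral.integral_same, sub_zero] at hγ hC
    rw [hγ, gammaL, if_pos rfl]
    exact div_pos hC (he.sigb_pos hk)
  · have := he.gammaL_succ_sub_integral_lamb_succ (show k < m by omega)
    have := div_lt_div_of_pos_left hC (he.sigb_pos hk) (he.sigb_succ_lt hk)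
    linarith

theorem gammaL_last (he : EffParams M sigv lamv m sigb lamb sigbar) :
    gammaL M sigv lamv lamb sigbar m = gammaStar M sigv lamv sigbar := by
  rw [gammaL, if_neg (by have := he.1; omega), gammaStar, he.lamb_last]
  exact intervalIntegral.integral_congr_Ioo_of_le zero_le_one fun s hs => by
    simp [min_eq_left hs.2.le]

end EffParams

/-- **Lemma (The entropy function is `C¹`).**
The function `𝓔 : [0,γ*] → ℝ` is continuously differentiable on `[0,γ*]` (with one-sided
derivatives at the endpoints). -/
theorem entropy_function_C1
    (M : ℕ) (sigv lamv : ℕ → ℝ) (hparams : ScaleParams M sigv lamv)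
    (m : ℕ) (sigb lamb : ℕ → ℝ) (sigbar : ℝ → ℝ)
    (heff : EffParams M sigv lamv m sigb lamb sigbar)
    (EntE : ℝ → ℝ) (hent : IsEntropy M sigv lamv m lamb sigbar EntE) :
    ∃ E' : ℝ → ℝ,
      (∀ γ ∈ Set.Icc 0 (gammaStar M sigv lamv sigbar),
        HasDerivWithinAt EntE (E' γ) (Set.Icc 0 (gammaStar M sigv lamv sigbar)) γ) ∧
      ContinuousOn E' (Set.Icc 0 (gammaStar M sigv lamv sigbar)) := by
  set A : ℕ → ℝ := fun k => ∫ s in 0..lamb k, stepFn M sigv lamv s ^ 2 / sigbar s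
  set C : ℕ → ℝ := fun k => ∫ s in lamb k..1, stepFn M sigv lamv s ^ 2
  have hmatch (k : ℕ) (hk : k + 1 < m) :=
    sub_sq_div_eq_and_of_sub_eq_div (heff.integral_stepFn_sq_pos hparams (by omega)).ne'
      (heff.integral_stepFn_sq_pos hparams hk).ne' (heff.sigb_pos (by omega)).ne'
      (heff.gammaL_succ_sub_integral_lamb (by omega))
      (heff.gammaL_succ_sub_integral_lamb_succ (by omega)) (heff.integral_stepFn_sq_sub_succ hk)
  obtain ⟨E', hE', hE'c⟩ := exists_hasDerivWithinAt_continuousOn_of_piecewise (f := EntE)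
    (x := gammaL M sigv lamv lamb sigbar) (q := fun k γ => 1 - lamb k - (γ - A k) ^ 2 / C k)
    (q' := fun k γ => -2 * (γ - A k) / C k) heff.1 (fun k hk => heff.gammaL_lt_succ hparams hk)
    (fun k _ γ => hasDerivAt_sub_sub_sq_div _ _ _ γ) (fun k _ => by fun_prop)
    (by simp [gammaL, hent.1, A, heff.lamb_zero])
    (fun k hk γ hγ => by simpa [Jint2] using hent.2 (k + 1) (by simp; omega) γ hγ.1 hγ.2)
    (fun k hk => (hmatch k hk).1) (fun k hk => (hmatch k hk).2)
  rw [heff.gammaL_last, show gammaL M sigv lamv lamb sigbar 0 = 0 from if_pos rfl] at hE' hE'c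
  exact ⟨E', hE', hE'c⟩
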